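/- arXiv:2605.25314 — 2 statements merged into one kernel-verified Lean document; each statement's English description precedes it below -/
import Mathlib

section
/- Let X be a set, 𝒲 a set of walls in ℝ^r, and U a wall and chamber family of subsets of X with set of walls 𝒲. Suppose α, β ∈ ℝ^r are separated by exactly one wall of 𝒲, say L^{−1}(γ), with L(α) ≤ γ < L(β). Then U^β ⊆ U^α. -/
open Set

/-- The pairing `L(α) = ∑ i, L i * α i` of a rational covector with a real point. -/
def linPair {r : ℕ} (L : Fin r → ℚ) (α : Fin r → ℝ) : ℝ := ∑ i, (L i : ℝ) * α i

/-- A wall in `ℝ^r`: an affine hyperplane of the form `L⁻¹(β)` for a nonzero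
`L ∈ ℚ_{≥0}^r` and `β ∈ ℝ`. -/
def IsWall {r : ℕ} (Hy : Set (Fin r → ℝ)) : Prop :=
  ∃ (L : Fin r → ℚ) (β : ℝ), (∀ i, 0 ≤ L i) ∧ L ≠ 0 ∧ Hy = {α | linPair L α = β}

/-- A set of walls in `ℝ^r`: a set of walls which is finite modulo translation by `ℤ^r`. -/
def IsWallSet {r : ℕ} (W : Set (Set (Fin r → ℝ))) : Prop :=
  (∀ Hy ∈ W, IsWall Hy) ∧
  ∃ W₀ ⊆ W, W₀.Finite ∧ ∀ Hy ∈ W, ∃ (m : Fin r → ℤ), ∃ H₀ ∈ W₀,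
    Hy = (fun α => α + fun i => (m i : ℝ)) '' H₀

/-- A chamber of a set of walls `W`: a nonempty set obtained by choosing, for each wall,
either the strict upper side or the weak lower side, for some partition `W = Wp ⊔ Wm`. -/
def IsChamber {r : ℕ} (W : Set (Set (Fin r → ℝ))) (σ : Set (Fin r → ℝ)) : Prop :=
  σ.Nonempty ∧
  ∃ Wp Wm : Set (Set (Fin r → ℝ)), Wp ∪ Wm = W ∧ Wp ∩ Wm = ∅ ∧
    σ = {α | (∀ Hy ∈ Wp, ∀ (L : Fin r → ℚ) (β : ℝ),
                (∀ i, 0 ≤ L i) → L ≠ 0 → Hy = {x | linPair L x = β} → β < linPair L α) ∧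
             (∀ Hy ∈ Wm, ∀ (L : Fin r → ℚ) (β : ℝ),
                (∀ i, 0 ≤ L i) → L ≠ 0 → Hy = {x | linPair L x = β} → linPair L α ≤ β)}

/-- A wall `L⁻¹(γ)` separates `α` and `β` if `L(α) ≤ γ < L(β)` or `L(β) ≤ γ < L(α)`. -/
def WallSeparates {r : ℕ} (Hy : Set (Fin r → ℝ)) (α β : Fin r → ℝ) : Prop :=
  ∃ (L : Fin r → ℚ) (γ : ℝ), (∀ i, 0 ≤ L i) ∧ L ≠ 0 ∧ Hy = {x | linPair L x = γ} ∧
    ((linPair L α ≤ γ ∧ γ < linPair L β) ∨ (linPair L β ≤ γ ∧ γ < linPair L α))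

/-!
Walk from `α` towards `β` to a point `p` of `[α, β]` just beyond the wall `L⁻¹(γ)`; since no
other wall separates `α` and `β`, `p` lies in the chamber of `β`. Then `q = p - ε • 1 ≤ p` lies
in the chamber of `α`: it is back across `L⁻¹(γ)`, and for small `ε` it crosses no other wall,
because the walls strictly below `α` or `β` keep a uniform distance from them along the diagonal.
Hence `U β = U p ⊆ U q = U α`.
-/

open Filter Topology

section Walls

variable {r : ℕ}

def linPairₗ (L : Fin r → ℚ) : (Fin r → ℝ) →ₗ[ℝ] ℝ where
  toFun := linPair L
  map_add' := dotProduct_add _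
  map_smul' c := dotProduct_smul c _

lemma linPair_sub (L : Fin r → ℚ) (x y : Fin r → ℝ) :
    linPair L (x - y) = linPair L x - linPair L y :=
  dotProduct_sub _ _ _

lemma linPair_sub_smul_one (L : Fin r → ℚ) (x : Fin r → ℝ) (c : ℝ) :
    linPair L (x - c • 1) = linPair L x - c * ∑ i, (L i : ℝ) := by
  rw [← dotProduct_one]
  exact (linPair_sub L _ _).trans (congrArg _ (dotProduct_smul c _ _))

lemma linPair_mono {L : Fin r → ℚ} (hL : ∀ i, 0 ≤ L i) : Monotone (linPair L) :=
  fun _ _ hxy => Finset.sum_le_sum fun i _ =>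
    mul_le_mul_of_nonneg_left (hxy i) (by exact_mod_cast hL i)

lemma sum_cast_pos {L : Fin r → ℚ} (hL : ∀ i, 0 ≤ L i) (hL0 : L ≠ 0) :
    0 < ∑ i, (L i : ℝ) := by
  obtain ⟨j, hj⟩ := Function.ne_iff.1 hL0
  exact Finset.sum_pos' (fun i _ => by exact_mod_cast hL i)
    ⟨j, Finset.mem_univ j, by exact_mod_cast (hL j).lt_of_ne' hj⟩

/-- The side of `L⁻¹(γ)` on which `z` lies is read off the set alone: `z` is strictly above
it iff the diagonal ray going down from `z` meets it. -/
lemma lt_linPair_iff_exists_sub_smul_one_mem {L : Fin r → ℚ} (hL : ∀ i, 0 ≤ L i)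
    (hL0 : L ≠ 0) (γ : ℝ) (z : Fin r → ℝ) :
    γ < linPair L z ↔ ∃ t : ℝ, 0 < t ∧ z - t • 1 ∈ {x | linPair L x = γ} := by
  have hS := sum_cast_pos hL hL0
  simp only [Set.mem_ofPred_eq, linPair_sub_smul_one]
  constructor
  · intro h
    exact ⟨(linPair L z - γ) / ∑ i, (L i : ℝ), div_pos (sub_pos.2 h) hS, by field_simp; ring⟩
  · rintro ⟨t, ht, rfl⟩
    nlinarith

lemma lt_linPair_iff_of_setOf_eq {L L' : Fin r → ℚ} {γ γ' : ℝ}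
    (hL : ∀ i, 0 ≤ L i) (hL0 : L ≠ 0) (hL' : ∀ i, 0 ≤ L' i) (hL0' : L' ≠ 0)
    (h : {x | linPair L x = γ} = {x | linPair L' x = γ'}) (z : Fin r → ℝ) :
    γ < linPair L z ↔ γ' < linPair L' z := by
  rw [lt_linPair_iff_exists_sub_smul_one_mem hL hL0, h,
    ← lt_linPair_iff_exists_sub_smul_one_mem hL' hL0']

/-- The clauses of `IsChamber` for a single wall of `Wp`, resp. `Wm`. -/
def WallAbove (H : Set (Fin r → ℝ)) (z : Fin r → ℝ) : Prop :=
  ∀ (L : Fin r → ℚ) (γ : ℝ), (∀ i, 0 ≤ L i) → L ≠ 0 → H = {x | linPair L x = γ} →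
    γ < linPair L z

def WallBelow (H : Set (Fin r → ℝ)) (z : Fin r → ℝ) : Prop :=
  ∀ (L : Fin r → ℚ) (γ : ℝ), (∀ i, 0 ≤ L i) → L ≠ 0 → H = {x | linPair L x = γ} →
    linPair L z ≤ γ

lemma wallAbove_iff {L : Fin r → ℚ} (hL : ∀ i, 0 ≤ L i) (hL0 : L ≠ 0) {γ : ℝ}
    {z : Fin r → ℝ} : WallAbove {x | linPair L x = γ} z ↔ γ < linPair L z :=
  ⟨fun h => h L γ hL hL0 rfl,
    fun h _ _ hL' hL0' hH => (lt_linPair_iff_of_setOf_eq hL hL0 hL' hL0' hH z).1 h⟩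

lemma wallBelow_iff {L : Fin r → ℚ} (hL : ∀ i, 0 ≤ L i) (hL0 : L ≠ 0) {γ : ℝ}
    {z : Fin r → ℝ} : WallBelow {x | linPair L x = γ} z ↔ linPair L z ≤ γ :=
  ⟨fun h => h L γ hL hL0 rfl, fun h _ _ hL' hL0' hH => not_lt.1 fun h' =>
    (lt_linPair_iff_of_setOf_eq hL hL0 hL' hL0' hH z).2 h' |>.not_ge h⟩

namespace IsWall

variable {H : Set (Fin r → ℝ)}

lemma wallBelow_iff_not_wallAbove (hH : IsWall H) {z : Fin r → ℝ} :
    WallBelow H z ↔ ¬WallAbove H z := by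
  obtain ⟨L, γ, hL, hL0, rfl⟩ := hH
  rw [wallAbove_iff hL hL0, wallBelow_iff hL hL0, not_lt]

lemma wallAbove_mono (hH : IsWall H) {x y : Fin r → ℝ} (hxy : x ≤ y) (hx : WallAbove H x) :
    WallAbove H y := by
  obtain ⟨L, γ, hL, hL0, rfl⟩ := hH
  rw [wallAbove_iff hL hL0] at hx ⊢
  exact hx.trans_le (linPair_mono hL hxy)

lemma convex_setOf_wallAbove (hH : IsWall H) : Convex ℝ {x | WallAbove H x} := by
  obtain ⟨L, γ, hL, hL0, rfl⟩ := hH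
  simp only [wallAbove_iff hL hL0]
  exact convex_halfSpace_gt (linPairₗ L).isLinear γ

lemma convex_setOf_not_wallAbove (hH : IsWall H) : Convex ℝ {x | ¬WallAbove H x} := by
  obtain ⟨L, γ, hL, hL0, rfl⟩ := hH
  simp only [wallAbove_iff hL hL0, not_lt]
  exact convex_halfSpace_le (linPairₗ L).isLinear γ

lemma wallAbove_iff_of_mem_segment (hH : IsWall H) {x y z : Fin r → ℝ}
    (hxy : WallAbove H x ↔ WallAbove H y) (hz : z ∈ segment ℝ x y) :
    WallAbove H z ↔ WallAbove H x := by
  by_cases hx : WallAbove H x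
  · exact iff_of_true (hH.convex_setOf_wallAbove.segment_subset hx (hxy.1 hx) hz) hx
  · exact iff_of_false (hH.convex_setOf_not_wallAbove.segment_subset hx (mt hxy.2 hx) hz) hx

lemma wallSeparates_of_not_iff (hH : IsWall H) {α β : Fin r → ℝ}
    (h : ¬(WallAbove H α ↔ WallAbove H β)) : WallSeparates H α β := by
  obtain ⟨L, γ, hL, hL0, rfl⟩ := hH
  rw [wallAbove_iff hL hL0, wallAbove_iff hL hL0] at h
  refine ⟨L, γ, hL, hL0, rfl, ?_⟩
  simp only [← not_lt]
  tauto

end IsWall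

lemma isChamber_setOf_forall_wallAbove_iff {W : Set (Set (Fin r → ℝ))}
    (hW : ∀ H ∈ W, IsWall H) (z : Fin r → ℝ) :
    IsChamber W {x | ∀ H ∈ W, WallAbove H x ↔ WallAbove H z} := by
  refine ⟨⟨z, fun _ _ => Iff.rfl⟩, {H ∈ W | WallAbove H z}, {H ∈ W | ¬WallAbove H z},
    ?_, ?_, ?_⟩
  · ext H
    simp only [Set.mem_union, Set.mem_sep_iff]
    tauto
  · ext H
    simp only [Set.mem_inter_iff, Set.mem_sep_iff, Set.mem_empty_iff_false, iff_false]
    tauto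
  · ext x
    show _ ↔ (∀ H ∈ {H ∈ W | WallAbove H z}, WallAbove H x) ∧
      ∀ H ∈ {H ∈ W | ¬WallAbove H z}, WallBelow H x
    constructor
    · intro h
      exact ⟨fun H hH => (h H hH.1).2 hH.2, fun H hH =>
        (hW H hH.1).wallBelow_iff_not_wallAbove.2 fun hx => hH.2 ((h H hH.1).1 hx)⟩
    · rintro ⟨habove, hbelow⟩ H hH
      exact ⟨fun hx => by_contra fun hz =>
        (hW H hH).wallBelow_iff_not_wallAbove.1 (hbelow H ⟨hH, hz⟩) hx,
        fun hz => habove H ⟨hH, hz⟩⟩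

lemma exists_nat_mul_linPair_intCast_eq (L : Fin r → ℚ) :
    ∃ D : ℕ, 0 < D ∧ ∀ n : Fin r → ℤ, ∃ k : ℤ, (D : ℝ) * linPair L (fun i => (n i : ℝ)) = k := by
  have hint : ∀ i, ∃ k : ℤ, ((∏ i, (L i).den : ℕ) : ℚ) * L i = k := by
    intro i
    obtain ⟨m, hm⟩ := Finset.dvd_prod_of_mem (fun i => (L i).den) (Finset.mem_univ i)
    refine ⟨m * (L i).num, ?_⟩
    rw [hm]
    push_cast
    rw [← Rat.mul_den_eq_num]
    ring
  choose k hk using hint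
  refine ⟨∏ i, (L i).den, Finset.prod_pos fun i _ => (L i).pos, fun n => ⟨∑ i, k i * n i, ?_⟩⟩
  simp only [linPair, Finset.mul_sum, Int.cast_sum, Int.cast_mul]
  refine Finset.sum_congr rfl fun i _ => ?_
  rw [← mul_assoc, ← Rat.cast_natCast, ← Rat.cast_mul, hk i, Rat.cast_intCast]

lemma exists_pos_add_le_of_linPair_intCast_lt (L : Fin r → ℚ) (M : ℝ) :
    ∃ g > 0, ∀ n : Fin r → ℤ, linPair L (fun i => (n i : ℝ)) < M →
      linPair L (fun i => (n i : ℝ)) + g ≤ M := by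
  obtain ⟨D, hD, hk⟩ := exists_nat_mul_linPair_intCast_eq L
  have hDR : (0 : ℝ) < D := by exact_mod_cast hD
  refine ⟨(D * M - ⌈D * M⌉ + 1) / D, div_pos (by linarith [Int.ceil_lt_add_one ((D : ℝ) * M)]) hDR,
    fun n hn => ?_⟩
  obtain ⟨k, hk⟩ := hk n
  have hkM : k < ⌈(D : ℝ) * M⌉ := Int.lt_ceil.2 (by rw [← hk]; exact mul_lt_mul_of_pos_left hn hDR)
  have hkM' : (k : ℝ) ≤ ⌈(D : ℝ) * M⌉ - 1 := by exact_mod_cast Int.le_sub_one_of_lt hkM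
  rw [← sub_nonneg]
  have : (D : ℝ) * (M - (linPair L (fun i => (n i : ℝ)) + (D * M - ⌈D * M⌉ + 1) / D)) =
      ⌈(D : ℝ) * M⌉ - 1 - k := by
    rw [← hk]; field_simp; ring
  nlinarith

lemma image_add_setOf_linPair_eq (L : Fin r → ℚ) (γ : ℝ) (v : Fin r → ℝ) :
    (· + v) '' {x | linPair L x = γ} = {x | linPair L x = γ + linPair L v} := by
  ext y
  rw [Set.image_add_right, Set.mem_preimage, Set.mem_ofPred_eq, Set.mem_ofPred_eq,
    ← sub_eq_add_neg, linPair_sub, sub_eq_iff_eq_add]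

lemma eventually_wallAbove_image_add_intCast_sub_smul_one {L : Fin r → ℚ}
    (hL : ∀ i, 0 ≤ L i) (hL0 : L ≠ 0) (γ : ℝ) (a : Fin r → ℝ) :
    ∀ᶠ ε in 𝓝[>] (0 : ℝ), ∀ n : Fin r → ℤ,
      WallAbove ((· + fun i => (n i : ℝ)) '' {x | linPair L x = γ}) a →
      WallAbove ((· + fun i => (n i : ℝ)) '' {x | linPair L x = γ}) (a - ε • 1) := by
  have hS := sum_cast_pos hL hL0
  obtain ⟨g, hg, hgap⟩ := exists_pos_add_le_of_linPair_intCast_lt L (linPair L a - γ)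
  filter_upwards [Ioo_mem_nhdsGT (div_pos hg hS)] with ε hε n
  have hεS : ε * ∑ i, (L i : ℝ) < g := (lt_div_iff₀ hS).1 hε.2
  simp only [image_add_setOf_linPair_eq, wallAbove_iff hL hL0, linPair_sub_smul_one]
  intro h
  linarith [hgap n (by linarith)]

/-- Walls are finitely many translates of rational hyperplanes, so the ones strictly below `a`
cannot accumulate at `a`. -/
lemma IsWallSet.eventually_wallAbove_sub_smul_one {W : Set (Set (Fin r → ℝ))}
    (hW : IsWallSet W) (a : Fin r → ℝ) :
    ∀ᶠ ε in 𝓝[>] (0 : ℝ), ∀ H ∈ W, WallAbove H a → WallAbove H (a - ε • 1) := by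
  obtain ⟨hWall, W₀, hW₀, hfin, htranslate⟩ := hW
  have hbase : ∀ᶠ ε in 𝓝[>] (0 : ℝ), ∀ H₀ ∈ W₀, ∀ n : Fin r → ℤ,
      WallAbove ((· + fun i => (n i : ℝ)) '' H₀) a →
      WallAbove ((· + fun i => (n i : ℝ)) '' H₀) (a - ε • 1) := by
    refine (eventually_all_finite hfin).2 fun H₀ hH₀ => ?_
    obtain ⟨L, γ, hL, hL0, rfl⟩ := hWall H₀ (hW₀ hH₀)
    exact eventually_wallAbove_image_add_intCast_sub_smul_one hL hL0 γ a
  filter_upwards [hbase] with ε hε H hH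
  obtain ⟨n, H₀, hH₀, rfl⟩ := htranslate H hH
  exact hε H₀ hH₀ n

lemma exists_mem_segment_linPair_eq {L : Fin r → ℚ} {α β : Fin r → ℝ} {c : ℝ}
    (hc : c ∈ Set.Icc (linPair L α) (linPair L β)) :
    ∃ p ∈ segment ℝ α β, linPair L p = c := by
  rw [← segment_eq_Icc (hc.1.trans hc.2)] at hc
  obtain ⟨p, hp, hpc⟩ := (image_segment ℝ (linPairₗ L).toAffineMap α β).symm ▸ hc
  exact ⟨p, hp, hpc⟩

lemma exists_le_forall_wallAbove_iff {W : Set (Set (Fin r → ℝ))} (hW : IsWallSet W)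
    {Hy : Set (Fin r → ℝ)} {L : Fin r → ℚ} {γ : ℝ} (hL : ∀ i, 0 ≤ L i) (hL0 : L ≠ 0)
    (hHy : Hy = {x | linPair L x = γ}) {α β : Fin r → ℝ} (hα : linPair L α ≤ γ)
    (hβ : γ < linPair L β) (hsame : ∀ H ∈ W, H ≠ Hy → (WallAbove H α ↔ WallAbove H β)) :
    ∃ q p, q ≤ p ∧ (∀ H ∈ W, WallAbove H p ↔ WallAbove H β) ∧
      ∀ H ∈ W, WallAbove H q ↔ WallAbove H α := by
  obtain ⟨ε, ⟨hεα, hεβ⟩, hε⟩ := (((hW.eventually_wallAbove_sub_smul_one α).and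
    (hW.eventually_wallAbove_sub_smul_one β)).and eventually_mem_nhdsWithin).exists
  have hεS : 0 < ε * ∑ i, (L i : ℝ) := mul_pos hε (sum_cast_pos hL hL0)
  obtain ⟨p, hp, hpc⟩ := exists_mem_segment_linPair_eq (L := L) (α := α) (β := β)
    (c := min (linPair L β) (γ + ε * ∑ i, (L i : ℝ)))
    ⟨le_min (hα.trans hβ.le) (by linarith), min_le_left _ _⟩
  have hq : p - ε • 1 ∈ segment ℝ (α - ε • 1) (β - ε • 1) := by
    simpa only [neg_add_eq_sub] using (mem_segment_translate ℝ (-(ε • 1))).2 hp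
  refine ⟨p - ε • 1, p, sub_le_self _ (smul_nonneg hε.le zero_le_one), fun H hH => ?_,
    fun H hH => ?_⟩ <;> rcases eq_or_ne H Hy with rfl | hne
  · rw [hHy, wallAbove_iff hL hL0, wallAbove_iff hL hL0, hpc]
    exact iff_of_true (lt_min hβ (by linarith)) hβ
  · exact ((hW.1 H hH).wallAbove_iff_of_mem_segment (hsame H hH hne) hp).trans
      (hsame H hH hne)
  · rw [hHy, wallAbove_iff hL hL0, wallAbove_iff hL hL0, linPair_sub_smul_one, hpc]
    exact iff_of_false (by linarith [min_le_right (linPair L β) (γ + ε * ∑ i, (L i : ℝ))])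
      hα.not_gt
  · by_cases hA : WallAbove H α
    · exact iff_of_true ((hW.1 H hH).convex_setOf_wallAbove.segment_subset (hεα H hH hA)
        (hεβ H hH ((hsame H hH hne).1 hA)) hq) hA
    · refine iff_of_false (fun hq' => hA ?_) hA
      exact ((hW.1 H hH).wallAbove_iff_of_mem_segment (hsame H hH hne) hp).1
        ((hW.1 H hH).wallAbove_mono (sub_le_self _ (smul_nonneg hε.le zero_le_one)) hq')

lemma eq_of_forall_wallAbove_iff {X : Type*} {W : Set (Set (Fin r → ℝ))}
    (hW : ∀ H ∈ W, IsWall H) {U : (Fin r → ℝ) → Set X}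
    (hconst : ∀ σ : Set (Fin r → ℝ), IsChamber W σ → ∀ α ∈ σ, ∀ β ∈ σ, U α = U β)
    {x z : Fin r → ℝ} (h : ∀ H ∈ W, WallAbove H x ↔ WallAbove H z) : U x = U z :=
  hconst _ (isChamber_setOf_forall_wallAbove_iff hW z) x h z fun _ _ => Iff.rfl

end Walls

theorem wall_chamber_family_single_wall_general {r : ℕ} {X : Type*}
    (W : Set (Set (Fin r → ℝ))) (hW : IsWallSet W)
    (U : (Fin r → ℝ) → Set X)
    (hmono : ∀ α β : Fin r → ℝ, α ≤ β → U β ⊆ U α)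
    (hconst : ∀ σ : Set (Fin r → ℝ), IsChamber W σ → ∀ α ∈ σ, ∀ β ∈ σ, U α = U β)
    (α β : Fin r → ℝ) (Hy : Set (Fin r → ℝ))
    (L : Fin r → ℚ) (γ : ℝ)
    (hL : ∀ i, 0 ≤ L i) (hL0 : L ≠ 0) (hHdef : Hy = {x | linPair L x = γ})
    (hsep : linPair L α ≤ γ ∧ γ < linPair L β)
    (huniq : ∀ Hy' ∈ W, WallSeparates Hy' α β → Hy' = Hy) :
    U β ⊆ U α := by
  have hsame : ∀ H ∈ W, H ≠ Hy → (WallAbove H α ↔ WallAbove H β) := fun H hH hne =>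
    by_contra fun h => hne (huniq H hH ((hW.1 H hH).wallSeparates_of_not_iff h))
  obtain ⟨q, p, hqp, hp, hq⟩ :=
    exists_le_forall_wallAbove_iff hW hL hL0 hHdef hsep.1 hsep.2 hsame
  rw [← eq_of_forall_wallAbove_iff hW.1 hconst hp, ← eq_of_forall_wallAbove_iff hW.1 hconst hq]
  exact hmono q p hqp

/-- For a wall and chamber family `U` of subsets of `X` with set of walls `W`, if `α, β` are
separated by exactly one wall `L⁻¹(γ)` of `W`, with `L(α) ≤ γ < L(β)`, then `U^β ⊆ U^α`. -/
theorem wall_chamber_family_single_wall {r : ℕ} (hr : 0 < r) {X : Type*}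
    (W : Set (Set (Fin r → ℝ))) (hW : IsWallSet W)
    (U : (Fin r → ℝ) → Set X)
    (hmono : ∀ α β : Fin r → ℝ, α ≤ β → U β ⊆ U α)
    (hconst : ∀ σ : Set (Fin r → ℝ), IsChamber W σ → ∀ α ∈ σ, ∀ β ∈ σ, U α = U β)
    (α β : Fin r → ℝ) (Hy : Set (Fin r → ℝ)) (hHy : Hy ∈ W)
    (L : Fin r → ℚ) (γ : ℝ)
    (hL : ∀ i, 0 ≤ L i) (hL0 : L ≠ 0) (hHdef : Hy = {x | linPair L x = γ})
    (hsep : linPair L α ≤ γ ∧ γ < linPair L β)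
    (huniq : ∀ Hy' ∈ W, WallSeparates Hy' α β → Hy' = Hy) :
    U β ⊆ U α :=
  wall_chamber_family_single_wall_general W hW U hmono hconst α β Hy L γ hL hL0 hHdef hsep huniq
end

section
/- Let 𝒲 be a set of walls in ℝ^r. Then every chamber of 𝒲 has nonempty topological interior, and the assignment σ ↦ interior(σ) is a bijection from the set of chambers of 𝒲 onto the set of connected components of ℝ^r ∖ ⋃_{H ∈ 𝒲} H. -/
open Set

/-!
Which side of a wall a point lies on does not depend on the chosen equation `L(α) = β` with
`L ≥ 0`, since all of them increase along `(1, …, 1)`; so a chamber is a fibre of the map sending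
`α` to the set of walls it lies above. As the forms are rational and `W` is finite modulo `ℤ^r`,
the walls are locally finite: the complement `Ω` of their union is open, and the side of each
wall is constant on preconnected subsets of `Ω`. The part of a chamber inside `Ω` is an
intersection of open half-spaces, hence convex, hence a whole component of `Ω`; it is the
interior of the chamber, and it is nonempty because pushing a point of the chamber slightly
down along `(1, …, 1)` moves it off every wall without changing its sides.
-/

open Filter Topology

section

variable {r : ℕ}

lemma isLinearMap_linPair (L : Fin r → ℚ) : IsLinearMap ℝ (linPair L) where
  map_add a b := by simp only [linPair, Pi.add_apply, mul_add, Finset.sum_add_distrib]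
  map_smul c a := by
    simp only [linPair, Pi.smul_apply, smul_eq_mul, Finset.mul_sum]
    exact Finset.sum_congr rfl fun i _ => by ring

lemma continuous_linPair (L : Fin r → ℚ) : Continuous (linPair L) := by
  unfold linPair; fun_prop

lemma linPair_add_smul_one (L : Fin r → ℚ) (α : Fin r → ℝ) (t : ℝ) :
    linPair L (α + t • 1) = linPair L α + t * linPair L 1 := by
  rw [(isLinearMap_linPair L).map_add, (isLinearMap_linPair L).map_smul, smul_eq_mul]

lemma linPair_one_nonneg {L : Fin r → ℚ} (hL : ∀ i, 0 ≤ L i) : 0 ≤ linPair L 1 :=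
  Finset.sum_nonneg fun i _ => by simpa using hL i

lemma linPair_one_pos {L : Fin r → ℚ} (hL : ∀ i, 0 ≤ L i) (hL0 : L ≠ 0) : 0 < linPair L 1 := by
  obtain ⟨j, hj⟩ := Function.ne_iff.mp hL0
  refine Finset.sum_pos' (fun i _ => by simpa using hL i) ⟨j, Finset.mem_univ j, ?_⟩
  simpa using lt_of_le_of_ne (hL j) (Ne.symm hj)

/-- If `L'(α) ≤ β'`, moving from `α` along `(1, …, 1)` reaches `{L' = β'}` without ever meeting
`{L = β}`. -/
lemma lt_linPair_of_setOf_eq {L L' : Fin r → ℚ} {β β' : ℝ} (hL : ∀ i, 0 ≤ L i)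
    (hL' : ∀ i, 0 ≤ L' i) (hL'0 : L' ≠ 0)
    (h : {x | linPair L x = β} = {x | linPair L' x = β'}) {α : Fin r → ℝ}
    (hα : β < linPair L α) : β' < linPair L' α := by
  by_contra! hle
  have hS' := linPair_one_pos hL' hL'0
  have ht : 0 ≤ (β' - linPair L' α) / linPair L' 1 := div_nonneg (by linarith) hS'.le
  have hp : α + ((β' - linPair L' α) / linPair L' 1) • 1 ∈ {x | linPair L' x = β'} := by
    change linPair L' _ = β'
    rw [linPair_add_smul_one, div_mul_cancel₀ _ hS'.ne']
    ring
  rw [← h] at hp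
  change linPair L _ = β at hp
  rw [linPair_add_smul_one] at hp
  nlinarith [linPair_one_nonneg hL]

def LiesAbove (Hy : Set (Fin r → ℝ)) (α : Fin r → ℝ) : Prop :=
  ∀ (L : Fin r → ℚ) (β : ℝ), (∀ i, 0 ≤ L i) → L ≠ 0 → Hy = {x | linPair L x = β} →
    β < linPair L α

def LiesBelow (Hy : Set (Fin r → ℝ)) (α : Fin r → ℝ) : Prop :=
  ∀ (L : Fin r → ℚ) (β : ℝ), (∀ i, 0 ≤ L i) → L ≠ 0 → Hy = {x | linPair L x = β} →
    linPair L α ≤ β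

lemma liesAbove_iff {Hy : Set (Fin r → ℝ)} {L : Fin r → ℚ} {β : ℝ} (hL : ∀ i, 0 ≤ L i)
    (hL0 : L ≠ 0) (hHy : Hy = {x | linPair L x = β}) {α : Fin r → ℝ} :
    LiesAbove Hy α ↔ β < linPair L α :=
  ⟨fun h => h L β hL hL0 hHy, fun h _ _ hL' hL'0 hHy' =>
    lt_linPair_of_setOf_eq hL hL' hL'0 (hHy ▸ hHy') h⟩

lemma liesBelow_iff_not_liesAbove {Hy : Set (Fin r → ℝ)} (hHy : IsWall Hy) {α : Fin r → ℝ} :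
    LiesBelow Hy α ↔ ¬LiesAbove Hy α := by
  obtain ⟨L, β, hL, hL0, rfl⟩ := hHy
  rw [liesAbove_iff hL hL0 rfl, not_lt]
  refine ⟨fun h => h L β hL hL0 rfl, fun h L' β' hL' hL'0 hHy' => ?_⟩
  rw [← not_lt, ← liesAbove_iff hL' hL'0 hHy', liesAbove_iff hL hL0 rfl]
  exact not_lt.2 h

def aboveWalls (W : Set (Set (Fin r → ℝ))) (α : Fin r → ℝ) : Set (Set (Fin r → ℝ)) :=
  {Hy ∈ W | LiesAbove Hy α}

def chamberOf (W : Set (Set (Fin r → ℝ))) (x : Fin r → ℝ) : Set (Fin r → ℝ) :=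
  {α | aboveWalls W α = aboveWalls W x}

lemma aboveWalls_eq_iff {W : Set (Set (Fin r → ℝ))} {a b : Fin r → ℝ} :
    aboveWalls W a = aboveWalls W b ↔ ∀ Hy ∈ W, (LiesAbove Hy a ↔ LiesAbove Hy b) := by
  simp [aboveWalls, Set.ext_iff]

lemma chamberOf_eq_of_mem {W : Set (Set (Fin r → ℝ))} {x y : Fin r → ℝ}
    (h : y ∈ chamberOf W x) : chamberOf W y = chamberOf W x := by
  ext α
  exact iff_of_eq (congrArg (aboveWalls W α = ·) h)

lemma setOf_liesAbove_liesBelow_eq {W Wp Wm : Set (Set (Fin r → ℝ))}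
    (hW : ∀ Hy ∈ W, IsWall Hy) (hup : Wp ∪ Wm = W) (hdisj : Wp ∩ Wm = ∅) :
    {α | (∀ Hy ∈ Wp, LiesAbove Hy α) ∧ ∀ Hy ∈ Wm, LiesBelow Hy α} =
      {α | aboveWalls W α = Wp} := by
  subst hup
  ext α
  refine ⟨fun ⟨hp, hm⟩ => ?_, fun h => ⟨fun Hy hHy => ?_, fun Hy hHy => ?_⟩⟩
  · ext Hy
    refine ⟨fun ⟨hHy, ha⟩ => hHy.resolve_right fun hHym => ?_, fun hHy => ⟨Or.inl hHy, hp Hy hHy⟩⟩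
    exact (liesBelow_iff_not_liesAbove (hW Hy hHy)).1 (hm Hy hHym) ha
  · exact (h.symm ▸ hHy : Hy ∈ aboveWalls _ α).2
  · refine (liesBelow_iff_not_liesAbove (hW Hy (Or.inr hHy))).2 fun ha => ?_
    have hHyp : Hy ∈ Wp := h ▸ ⟨Or.inr hHy, ha⟩
    exact (hdisj ▸ ⟨hHyp, hHy⟩ : Hy ∈ (∅ : Set (Set (Fin r → ℝ))))

lemma isChamber_iff {W : Set (Set (Fin r → ℝ))} (hW : ∀ Hy ∈ W, IsWall Hy)
    {σ : Set (Fin r → ℝ)} : IsChamber W σ ↔ ∃ x, σ = chamberOf W x := by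
  constructor
  · rintro ⟨⟨x, hx⟩, Wp, Wm, hup, hdisj, hσ⟩
    have hσ' : σ = {α | aboveWalls W α = Wp} :=
      hσ.trans (setOf_liesAbove_liesBelow_eq hW hup hdisj)
    have hx' : aboveWalls W x = Wp := (hσ' ▸ hx :)
    exact ⟨x, hσ'.trans (by rw [← hx']; rfl)⟩
  · rintro ⟨x, rfl⟩
    refine ⟨⟨x, rfl⟩, aboveWalls W x, W \ aboveWalls W x, union_sdiff_cancel (sep_subset _ _),
      inter_sdiff_self _ _, ?_⟩
    exact (setOf_liesAbove_liesBelow_eq hW (union_sdiff_cancel (sep_subset _ _))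
      (inter_sdiff_self _ _)).symm

lemma eventually_forall_eq_intCast_imp (a : ℝ) : ∀ᶠ u : ℝ in 𝓝 a, ∀ k : ℤ, u = k → a = k := by
  have hS : IsClosed ((Int.cast : ℤ → ℝ) '' {k | (k : ℝ) ≠ a}) :=
    Int.isClosedEmbedding_coe_real.isClosedMap _ (isClosed_discrete _)
  filter_upwards [hS.isOpen_compl.mem_nhds fun ⟨k, hk, hka⟩ => hk hka] with u hu k huk
  by_contra hak
  exact hu ⟨k, Ne.symm hak, huk.symm⟩

lemma exists_nat_mul_linPair_intCast (L : Fin r → ℚ) :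
    ∃ d : ℕ, 0 < d ∧ ∀ m : Fin r → ℤ, ∃ k : ℤ, (d : ℝ) * linPair L (fun i => (m i : ℝ)) = k := by
  have hden : ∀ i, ∃ c : ℤ, ((∏ j, (L j).den : ℕ) : ℚ) * L i = c := fun i => by
    obtain ⟨e, he⟩ := Finset.dvd_prod_of_mem (fun j => (L j).den) (Finset.mem_univ i)
    refine ⟨e * (L i).num, ?_⟩
    rw [he]
    push_cast
    rw [mul_comm ((L i).den : ℚ), mul_assoc, Rat.den_mul_eq_num]
  choose c hc using hden
  refine ⟨∏ j, (L j).den, Finset.prod_pos fun j _ => (L j).pos, fun m => ⟨∑ i, c i * m i, ?_⟩⟩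
  simp only [linPair, Finset.mul_sum]
  push_cast
  refine Finset.sum_congr rfl fun i _ => ?_
  rw [← mul_assoc]
  congr 1
  exact_mod_cast hc i

/-- The levels of the translates lie in the discrete set `β + d⁻¹ℤ`. -/
lemma eventually_mem_translate_imp_mem (L : Fin r → ℚ) (β : ℝ) (x : Fin r → ℝ) :
    ∀ᶠ z in 𝓝 x, ∀ m : Fin r → ℤ,
      z ∈ (fun α => α + fun i => (m i : ℝ)) '' {α | linPair L α = β} →
        x ∈ (fun α => α + fun i => (m i : ℝ)) '' {α | linPair L α = β} := by
  obtain ⟨d, hd, hk⟩ := exists_nat_mul_linPair_intCast L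
  choose k hk using hk
  have hdR : (d : ℝ) ≠ 0 := by positivity
  have hmem : ∀ m z, z ∈ (fun α => α + fun i => (m i : ℝ)) '' {α | linPair L α = β} ↔
      (d : ℝ) * (linPair L z - β) = k m := fun m z => by
    rw [image_add_right, mem_preimage, ← hk m, mul_right_inj' hdR]
    change linPair L (z + -fun i => (m i : ℝ)) = β ↔ _
    rw [(isLinearMap_linPair L).map_add, (isLinearMap_linPair L).map_neg]
    constructor <;> intro h <;> linarith
  have hf : Continuous fun z => (d : ℝ) * (linPair L z - β) :=
    continuous_const.mul ((continuous_linPair L).sub continuous_const)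
  filter_upwards [(hf.tendsto x).eventually (eventually_forall_eq_intCast_imp _)] with z hz m
  simpa only [hmem] using hz (k m)

lemma IsWallSet.eventually_mem_imp_mem {W : Set (Set (Fin r → ℝ))} (hW : IsWallSet W)
    (x : Fin r → ℝ) : ∀ᶠ z in 𝓝 x, ∀ Hy ∈ W, z ∈ Hy → x ∈ Hy := by
  obtain ⟨hwall, W₀, hW₀, hfin, htr⟩ := hW
  have hW₀x : ∀ H₀ ∈ W₀, ∀ᶠ z in 𝓝 x, ∀ m : Fin r → ℤ,
      z ∈ (fun α => α + fun i => (m i : ℝ)) '' H₀ →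
        x ∈ (fun α => α + fun i => (m i : ℝ)) '' H₀ := fun H₀ hH₀ => by
    obtain ⟨L, β, -, -, rfl⟩ := hwall H₀ (hW₀ hH₀)
    exact eventually_mem_translate_imp_mem L β x
  filter_upwards [hfin.eventually_all.2 hW₀x] with z hz Hy hHy
  obtain ⟨m, H₀, hH₀, rfl⟩ := htr Hy hHy
  exact hz H₀ hH₀ m

lemma liesAbove_iff_of_isPreconnected {Hy s : Set (Fin r → ℝ)} (hHy : IsWall Hy)
    (hs : IsPreconnected s) (hsHy : Disjoint s Hy) {a b : Fin r → ℝ} (ha : a ∈ s) (hb : b ∈ s) :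
    LiesAbove Hy a ↔ LiesAbove Hy b := by
  obtain ⟨L, β, hL, hL0, rfl⟩ := hHy
  simp only [liesAbove_iff hL hL0 rfl]
  have hsides : s ⊆ {z | β < linPair L z} ∪ {z | linPair L z < β} := fun z hz =>
    (Ne.symm fun h : linPair L z = β => disjoint_left.1 hsHy hz h).lt_or_gt
  have hup : ∀ c ∈ s, β < linPair L c → s ⊆ {z | β < linPair L z} := fun c hc h =>
    hs.subset_left_of_subset_union (isOpen_lt continuous_const (continuous_linPair L))
      (isOpen_lt (continuous_linPair L) continuous_const)
      (disjoint_left.2 fun z (h₁ : β < linPair L z) h₂ => lt_asymm h₁ h₂) hsides ⟨c, hc, h⟩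
  exact ⟨fun h => hup a ha h hb, fun h => hup b hb h ha⟩

lemma IsWallSet.eventually_liesAbove_iff {W : Set (Set (Fin r → ℝ))} (hW : IsWallSet W)
    (x : Fin r → ℝ) :
    ∀ᶠ z in 𝓝 x, ∀ Hy ∈ W, x ∉ Hy → z ∉ Hy ∧ (LiesAbove Hy z ↔ LiesAbove Hy x) := by
  obtain ⟨ε, hε, hball⟩ := Metric.eventually_nhds_iff_ball.1 (hW.eventually_mem_imp_mem x)
  refine Metric.eventually_nhds_iff_ball.2 ⟨ε, hε, fun z hz Hy hHy hxHy => ?_⟩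
  have hdisj : Disjoint (Metric.ball x ε) Hy :=
    disjoint_left.2 fun w hw hwHy => hxHy (hball w hw Hy hHy hwHy)
  exact ⟨fun h => hxHy (hball z hz Hy hHy h), liesAbove_iff_of_isPreconnected (hW.1 Hy hHy)
    (convex_ball x ε).isPreconnected hdisj hz (Metric.mem_ball_self hε)⟩

def wallComplement (W : Set (Set (Fin r → ℝ))) : Set (Fin r → ℝ) := {α | ∀ Hy ∈ W, α ∉ Hy}

lemma aboveWalls_eq_of_isPreconnected {W : Set (Set (Fin r → ℝ))} (hW : ∀ Hy ∈ W, IsWall Hy)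
    {s : Set (Fin r → ℝ)} (hs : IsPreconnected s) (hsW : s ⊆ wallComplement W)
    {a b : Fin r → ℝ} (ha : a ∈ s) (hb : b ∈ s) : aboveWalls W a = aboveWalls W b :=
  aboveWalls_eq_iff.2 fun Hy hHy => liesAbove_iff_of_isPreconnected (hW Hy hHy) hs
    (disjoint_left.2 fun _ hz => hsW hz Hy hHy) ha hb

lemma convex_chamberOf_inter_wallComplement {W : Set (Set (Fin r → ℝ))}
    (hW : ∀ Hy ∈ W, IsWall Hy) (x : Fin r → ℝ) :
    Convex ℝ (chamberOf W x ∩ wallComplement W) := by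
  have hinter : chamberOf W x ∩ wallComplement W =
      ⋂ Hy ∈ W, {α | α ∉ Hy ∧ (LiesAbove Hy α ↔ LiesAbove Hy x)} := by
    ext α
    simp only [chamberOf, wallComplement, mem_inter_iff, mem_ofPred_eq, aboveWalls_eq_iff,
      mem_iInter]
    exact ⟨fun ⟨h₁, h₂⟩ Hy hHy => ⟨h₂ Hy hHy, h₁ Hy hHy⟩,
      fun h => ⟨fun Hy hHy => (h Hy hHy).2, fun Hy hHy => (h Hy hHy).1⟩⟩
  rw [hinter]
  refine convex_iInter₂ fun Hy hHy => ?_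
  obtain ⟨L, β, hL, hL0, rfl⟩ := hW Hy hHy
  simp only [liesAbove_iff hL hL0 rfl]
  by_cases hx : β < linPair L x
  · have hside : {α | α ∉ {α | linPair L α = β} ∧ (β < linPair L α ↔ β < linPair L x)} =
        {α | β < linPair L α} :=
      Set.ext fun α => ⟨fun h => h.2.2 hx, fun h => ⟨h.ne', iff_of_true h hx⟩⟩
    rw [hside]
    exact convex_halfSpace_gt (isLinearMap_linPair L) β
  · have hside : {α | α ∉ {α | linPair L α = β} ∧ (β < linPair L α ↔ β < linPair L x)} =
        {α | linPair L α < β} :=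
      Set.ext fun α => ⟨fun h => (not_lt.1 (h.2.not.2 hx)).lt_of_ne h.1,
        fun h => ⟨h.ne, iff_of_false h.not_gt hx⟩⟩
    rw [hside]
    exact convex_halfSpace_lt (isLinearMap_linPair L) β

lemma connectedComponentIn_wallComplement {W : Set (Set (Fin r → ℝ))}
    (hW : ∀ Hy ∈ W, IsWall Hy) {x : Fin r → ℝ} (hx : x ∈ wallComplement W) :
    connectedComponentIn (wallComplement W) x = chamberOf W x ∩ wallComplement W :=
  Subset.antisymm
    (fun _ hz => ⟨aboveWalls_eq_of_isPreconnected hW isPreconnected_connectedComponentIn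
      (connectedComponentIn_subset _ _) hz (mem_connectedComponentIn hx),
      connectedComponentIn_subset _ _ hz⟩)
    ((convex_chamberOf_inter_wallComplement hW x).isPreconnected.subset_connectedComponentIn
      ⟨rfl, hx⟩ inter_subset_right)

lemma tendsto_add_smul_one (x : Fin r → ℝ) :
    Tendsto (fun t : ℝ => x + t • (1 : Fin r → ℝ)) (𝓝 0) (𝓝 x) :=
  (by fun_prop : Continuous fun t : ℝ => x + t • (1 : Fin r → ℝ)).tendsto' 0 x (by simp)

lemma nonempty_chamberOf_inter_wallComplement {W : Set (Set (Fin r → ℝ))} (hW : IsWallSet W)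
    (x : Fin r → ℝ) : (chamberOf W x ∩ wallComplement W).Nonempty := by
  obtain ⟨t, ht, hz⟩ :=
    ((tendsto_add_smul_one x).eventually (hW.eventually_liesAbove_iff x)).exists_lt
  have key : ∀ Hy ∈ W, x + t • 1 ∉ Hy ∧ (LiesAbove Hy (x + t • 1) ↔ LiesAbove Hy x) := by
    intro Hy hHy
    by_cases hxHy : x ∈ Hy
    · obtain ⟨L, β, hL, hL0, rfl⟩ := hW.1 Hy hHy
      have hx : linPair L x = β := hxHy
      have hlt : linPair L (x + t • 1) < β := by
        rw [linPair_add_smul_one, hx]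
        nlinarith [linPair_one_pos hL hL0]
      simp only [liesAbove_iff hL hL0 rfl, hx, lt_irrefl, iff_false, not_lt]
      exact ⟨hlt.ne, hlt.le⟩
    · exact hz Hy hHy hxHy
  exact ⟨x + t • 1, aboveWalls_eq_iff.2 fun Hy hHy => (key Hy hHy).2,
    fun Hy hHy => (key Hy hHy).1⟩

lemma isOpen_wallComplement {W : Set (Set (Fin r → ℝ))} (hW : IsWallSet W) :
    IsOpen (wallComplement W) :=
  isOpen_iff_mem_nhds.2 fun x hx => by
    filter_upwards [hW.eventually_mem_imp_mem x] with z hz Hy hHy hzHy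
    exact hx Hy hHy (hz Hy hHy hzHy)

lemma isOpen_chamberOf_inter_wallComplement {W : Set (Set (Fin r → ℝ))} (hW : IsWallSet W)
    (x : Fin r → ℝ) : IsOpen (chamberOf W x ∩ wallComplement W) :=
  isOpen_iff_mem_nhds.2 fun y hy => by
    rw [← chamberOf_eq_of_mem hy.1, ← connectedComponentIn_wallComplement hW.1 hy.2]
    exact (isOpen_wallComplement hW).connectedComponentIn.mem_nhds (mem_connectedComponentIn hy.2)

/-- A point of a chamber on a wall is not interior: pushing it up along `(1, …, 1)` crosses
the wall. -/
lemma interior_chamberOf {W : Set (Set (Fin r → ℝ))} (hW : IsWallSet W) (x : Fin r → ℝ) :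
    interior (chamberOf W x) = chamberOf W x ∩ wallComplement W := by
  refine Subset.antisymm (fun y hy => ⟨interior_subset hy, fun Hy hHy hyHy => ?_⟩)
    (interior_maximal inter_subset_left (isOpen_chamberOf_inter_wallComplement hW x))
  obtain ⟨t, ht, hz⟩ :=
    ((tendsto_add_smul_one y).eventually (mem_interior_iff_mem_nhds.1 hy)).exists_gt
  have hside := aboveWalls_eq_iff.1 (hz.trans (interior_subset hy).symm) Hy hHy
  obtain ⟨L, β, hL, hL0, rfl⟩ := hW.1 Hy hHy
  have hyL : linPair L y = β := hyHy
  rw [liesAbove_iff hL hL0 rfl, liesAbove_iff hL hL0 rfl, linPair_add_smul_one, hyL] at hside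
  exact lt_irrefl β (hside.1 (by nlinarith [linPair_one_pos hL hL0]))

end

theorem chamber_interiors_are_components_general {r : ℕ}
    (W : Set (Set (Fin r → ℝ))) (hW : IsWallSet W) :
    (∀ σ : Set (Fin r → ℝ), IsChamber W σ → (interior σ).Nonempty) ∧
    (∀ σ : Set (Fin r → ℝ), IsChamber W σ →
      ∃ x : Fin r → ℝ, (∀ Hy ∈ W, x ∉ Hy) ∧
        interior σ = connectedComponentIn {α : Fin r → ℝ | ∀ Hy ∈ W, α ∉ Hy} x) ∧
    (∀ σ σ' : Set (Fin r → ℝ), IsChamber W σ → IsChamber W σ' →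
      interior σ = interior σ' → σ = σ') ∧
    (∀ x : Fin r → ℝ, (∀ Hy ∈ W, x ∉ Hy) →
      ∃ σ : Set (Fin r → ℝ), IsChamber W σ ∧
        interior σ = connectedComponentIn {α : Fin r → ℝ | ∀ Hy ∈ W, α ∉ Hy} x) := by
  have hΩ : {α : Fin r → ℝ | ∀ Hy ∈ W, α ∉ Hy} = wallComplement W := rfl
  simp only [hΩ, isChamber_iff hW.1]
  refine ⟨?_, ?_, ?_, fun x hx => ⟨chamberOf W x, ⟨x, rfl⟩, ?_⟩⟩
  · rintro σ ⟨x, rfl⟩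
    rw [interior_chamberOf hW]
    exact nonempty_chamberOf_inter_wallComplement hW x
  · rintro σ ⟨x, rfl⟩
    obtain ⟨y, hyx, hy⟩ := nonempty_chamberOf_inter_wallComplement hW x
    refine ⟨y, hy, ?_⟩
    rw [interior_chamberOf hW, connectedComponentIn_wallComplement hW.1 hy,
      chamberOf_eq_of_mem hyx]
  · rintro σ σ' ⟨x, rfl⟩ ⟨x', rfl⟩ h
    obtain ⟨y, hy⟩ := nonempty_chamberOf_inter_wallComplement hW x
    rw [interior_chamberOf hW, interior_chamberOf hW] at h
    have hy' : y ∈ chamberOf W x' ∩ wallComplement W := h ▸ hy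
    exact (chamberOf_eq_of_mem hy.1).symm.trans (chamberOf_eq_of_mem hy'.1)
  · rw [interior_chamberOf hW, connectedComponentIn_wallComplement hW.1 hx]

/-- Every chamber of a set of walls `W` has nonempty interior, and `σ ↦ interior σ` is a
bijection from the chambers of `W` onto the connected components of the complement of the
union of the walls. -/
theorem chamber_interiors_are_components {r : ℕ} (hr : 0 < r)
    (W : Set (Set (Fin r → ℝ))) (hW : IsWallSet W) :
    (∀ σ : Set (Fin r → ℝ), IsChamber W σ → (interior σ).Nonempty) ∧
    (∀ σ : Set (Fin r → ℝ), IsChamber W σ →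
      ∃ x : Fin r → ℝ, (∀ Hy ∈ W, x ∉ Hy) ∧
        interior σ = connectedComponentIn {α : Fin r → ℝ | ∀ Hy ∈ W, α ∉ Hy} x) ∧
    (∀ σ σ' : Set (Fin r → ℝ), IsChamber W σ → IsChamber W σ' →
      interior σ = interior σ' → σ = σ') ∧
    (∀ x : Fin r → ℝ, (∀ Hy ∈ W, x ∉ Hy) →
      ∃ σ : Set (Fin r → ℝ), IsChamber W σ ∧
        interior σ = connectedComponentIn {α : Fin r → ℝ | ∀ Hy ∈ W, α ∉ Hy} x) :=
  chamber_interiors_are_components_general W hW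
end
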